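/- Let I ⊂ ℝ be an open interval with 0 ∉ I and 1 ∉ I, let A₀, A₁, B₀, B₁, D₁, D₂, E₀, E₁ be real constants with E₀ ≠ 0 and E₁ ≠ 0, and let v₀, v₁, v₂ : I → ℝ be differentiable functions satisfying the system x(x−1)v₀' = (A₀x+B₀)v₀ + 2E₀v₁, x(x−1)v₁' = −D₁x(x−1)v₀ + (A₁x+B₁)v₁ + E₁v₂, x(x−1)v₂' = −D₂x(x−1)v₁ on I. Then v₀ is three times differentiable on I and satisfies 0 = x²(x−1)²·v₀''' − [C̃₀(x) + C̃₁(x) + 1 − 2x]·x(x−1)·v₀'' + [(D₂E₁ + 2D₁E₀ − A₁ − 2A₀ + 2)·x(x−1) + C̃₀(x)·C̃₁(x)]·v₀' + [A₀·C̃₁(x) + (A₁ − D₂E₁)(A₀x+B₀) − 2D₁E₀(1−2x)]·v₀, where C̃_p(x) = (A_p − 2)x + B_p + 1 for p = 0, 1. -/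

import Mathlib

/-- Auxiliary: if `y(y-1) * f y = F y` on an open set avoiding the zeros of `y(y-1)`,
then `f` is differentiable at interior points and the product rule identity holds. -/
lemma jacobi_aux {I : Set ℝ} (hIo : IsOpen I) {x : ℝ} (hx : x ∈ I)
    (hne : ∀ y ∈ I, y * (y - 1) ≠ 0)
    {f F : ℝ → ℝ} {F' : ℝ} (hF : HasDerivAt F F' x)
    (heq : ∀ y ∈ I, y * (y - 1) * f y = F y) :
    DifferentiableAt ℝ f x ∧
      deriv f x * (x * (x - 1)) + f x * (2 * x - 1) = F' := by
  have hmem : I ∈ nhds x := hIo.mem_nhds hx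
  have hfe : f =ᶠ[nhds x] fun y => F y / (y * (y - 1)) := by
    filter_upwards [hmem] with y hy
    rw [eq_div_iff (hne y hy)]
    linear_combination heq y hy
  have hdiv : DifferentiableAt ℝ (fun y => F y / (y * (y - 1))) x := by
    exact hF.differentiableAt.div (by fun_prop) (hne x hx)
  have hdf : DifferentiableAt ℝ f x := hfe.differentiableAt_iff.mpr hdiv
  have hg : HasDerivAt (fun y : ℝ => y * (y - 1)) (2 * x - 1) x := by
    have := (hasDerivAt_id x).mul ((hasDerivAt_id x).sub_const 1)
    simp only [id_eq] at this
    exact this.congr_deriv (by ring)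
  have hφ : HasDerivAt (fun y => y * (y - 1) * f y)
      ((2 * x - 1) * f x + x * (x - 1) * deriv f x) x := hg.mul hdf.hasDerivAt
  have hE : F =ᶠ[nhds x] fun y => y * (y - 1) * f y := by
    filter_upwards [hmem] with y hy
    exact (heq y hy).symm
  have hF2 : HasDerivAt F ((2 * x - 1) * f x + x * (x - 1) * deriv f x) x :=
    hφ.congr_of_eventuallyEq hE
  have := hF.unique hF2
  exact ⟨hdf, by linarith⟩

theorem jacobi_system_elimination
    (a b : ℝ) (I : Set ℝ) (hI : I = Set.Ioo a b)
    (h0 : (0 : ℝ) ∉ I) (h1 : (1 : ℝ) ∉ I)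
    (A₀ A₁ B₀ B₁ D₁ D₂ E₀ E₁ : ℝ) (hE₀ : E₀ ≠ 0) (hE₁ : E₁ ≠ 0)
    (v₀ v₁ v₂ : ℝ → ℝ)
    (hd₀ : ∀ x ∈ I, DifferentiableAt ℝ v₀ x)
    (hd₁ : ∀ x ∈ I, DifferentiableAt ℝ v₁ x)
    (hd₂ : ∀ x ∈ I, DifferentiableAt ℝ v₂ x)
    (hsys₀ : ∀ x ∈ I, x * (x - 1) * deriv v₀ x = (A₀ * x + B₀) * v₀ x + 2 * E₀ * v₁ x)
    (hsys₁ : ∀ x ∈ I, x * (x - 1) * deriv v₁ x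
      = -D₁ * x * (x - 1) * v₀ x + (A₁ * x + B₁) * v₁ x + E₁ * v₂ x)
    (hsys₂ : ∀ x ∈ I, x * (x - 1) * deriv v₂ x = -D₂ * x * (x - 1) * v₁ x)
    (C : ℕ → ℝ → ℝ) (hC : C = fun p x => ((if p = 0 then A₀ else A₁) - 2) * x
      + (if p = 0 then B₀ else B₁) + 1) :
    (∀ x ∈ I, DifferentiableAt ℝ (deriv v₀) x ∧ DifferentiableAt ℝ (deriv (deriv v₀)) x) ∧
    ∀ x ∈ I,
      0 = x ^ 2 * (x - 1) ^ 2 * iteratedDeriv 3 v₀ x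
        - (C 0 x + C 1 x + 1 - 2 * x) * x * (x - 1) * iteratedDeriv 2 v₀ x
        + ((D₂ * E₁ + 2 * D₁ * E₀ - A₁ - 2 * A₀ + 2) * x * (x - 1) + C 0 x * C 1 x) * deriv v₀ x
        + (A₀ * C 1 x + (A₁ - D₂ * E₁) * (A₀ * x + B₀) - 2 * D₁ * E₀ * (1 - 2 * x)) * v₀ x := by
  have hIo : IsOpen I := by rw [hI]; exact isOpen_Ioo
  have hne : ∀ y ∈ I, y * (y - 1) ≠ 0 := by
    intro y hy
    refine mul_ne_zero (fun h => h0 (h ▸ hy)) (sub_ne_zero_of_ne (fun h => h1 (h ▸ hy)))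
  -- linear polynomial helpers
  have hlin : ∀ (c d : ℝ) (x : ℝ), HasDerivAt (fun y : ℝ => c * y + d) c x := by
    intro c d x
    simpa using ((hasDerivAt_id x).const_mul c).add_const d
  have hquad : ∀ (c : ℝ) (x : ℝ),
      HasDerivAt (fun y : ℝ => c * (y * (y - 1))) (c * (2 * x - 1)) x := by
    intro c x
    have h := (hasDerivAt_id x).mul ((hasDerivAt_id x).sub_const 1)
    have h2 := h.const_mul c
    simp only [id_eq] at h2
    exact h2.congr_deriv (by ring)
  -- Step 1: differentiate the v₀ equation
  have key₀ : ∀ x ∈ I, DifferentiableAt ℝ (deriv v₀) x ∧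
      deriv (deriv v₀) x * (x * (x - 1)) + deriv v₀ x * (2 * x - 1)
        = A₀ * v₀ x + (A₀ * x + B₀) * deriv v₀ x + 2 * E₀ * deriv v₁ x := by
    intro x hx
    have hF : HasDerivAt (fun y => (A₀ * y + B₀) * v₀ y + 2 * E₀ * v₁ y)
        (A₀ * v₀ x + (A₀ * x + B₀) * deriv v₀ x + 2 * E₀ * deriv v₁ x) x := by
      have h := ((hlin A₀ B₀ x).mul (hd₀ x hx).hasDerivAt).add
        ((hd₁ x hx).hasDerivAt.const_mul (2 * E₀))
      exact h.congr_deriv (by ring)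
    exact jacobi_aux hIo hx hne hF (hsys₀)
  -- Step 2: differentiate the v₁ equation
  have key₁ : ∀ x ∈ I, DifferentiableAt ℝ (deriv v₁) x ∧
      deriv (deriv v₁) x * (x * (x - 1)) + deriv v₁ x * (2 * x - 1)
        = -(D₁ * (2 * x - 1)) * v₀ x + -(D₁ * (x * (x - 1))) * deriv v₀ x
          + A₁ * v₁ x + (A₁ * x + B₁) * deriv v₁ x + E₁ * deriv v₂ x := by
    intro x hx
    have hF : HasDerivAt
        (fun y => -D₁ * (y * (y - 1)) * v₀ y + (A₁ * y + B₁) * v₁ y + E₁ * v₂ y)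
        (-(D₁ * (2 * x - 1)) * v₀ x + -(D₁ * (x * (x - 1))) * deriv v₀ x
          + A₁ * v₁ x + (A₁ * x + B₁) * deriv v₁ x + E₁ * deriv v₂ x) x := by
      have h := (((hquad (-D₁) x).mul (hd₀ x hx).hasDerivAt).add
        ((hlin A₁ B₁ x).mul (hd₁ x hx).hasDerivAt)).add
        ((hd₂ x hx).hasDerivAt.const_mul E₁)
      exact h.congr_deriv (by ring)
    refine jacobi_aux hIo hx hne hF ?_
    intro y hy
    linear_combination hsys₁ y hy
  -- Step 3: differentiate the equation from Step 1
  have key₃ : ∀ x ∈ I, DifferentiableAt ℝ (deriv (deriv v₀)) x ∧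
      deriv (deriv (deriv v₀)) x * (x * (x - 1)) + deriv (deriv v₀) x * (2 * x - 1)
        = A₀ * deriv v₀ x + (A₀ - 2) * deriv v₀ x
          + ((A₀ * x + B₀) - (2 * x - 1)) * deriv (deriv v₀) x
          + 2 * E₀ * deriv (deriv v₁) x := by
    intro x hx
    have hF : HasDerivAt
        (fun y => A₀ * v₀ y + ((A₀ - 2) * y + (B₀ + 1)) * deriv v₀ y
          + 2 * E₀ * deriv v₁ y)
        (A₀ * deriv v₀ x + (A₀ - 2) * deriv v₀ x
          + ((A₀ * x + B₀) - (2 * x - 1)) * deriv (deriv v₀) x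
          + 2 * E₀ * deriv (deriv v₁) x) x := by
      have h := (((hd₀ x hx).hasDerivAt.const_mul A₀).add
        ((hlin (A₀ - 2) (B₀ + 1) x).mul (key₀ x hx).1.hasDerivAt)).add
        ((key₁ x hx).1.hasDerivAt.const_mul (2 * E₀))
      exact h.congr_deriv (by ring)
    refine jacobi_aux hIo hx hne hF ?_
    intro y hy
    linear_combination (key₀ y hy).2
  refine ⟨fun x hx => ⟨(key₀ x hx).1, (key₃ x hx).1⟩, ?_⟩
  intro x hx
  have hC0 : C 0 x = (A₀ - 2) * x + B₀ + 1 := by rw [hC]; norm_num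
  have hC1 : C 1 x = (A₁ - 2) * x + B₁ + 1 := by rw [hC]; norm_num
  have hc1 : deriv v₂ x = -(D₂ * v₁ x) := by
    apply mul_left_cancel₀ (hne x hx)
    rw [hsys₂ x hx]; ring
  have h3 : iteratedDeriv 3 v₀ x = deriv (deriv (deriv v₀)) x := by
    rw [show (3 : ℕ) = 2 + 1 from rfl, iteratedDeriv_succ,
      show (2 : ℕ) = 1 + 1 from rfl, iteratedDeriv_succ, iteratedDeriv_one]
  have h2 : iteratedDeriv 2 v₀ x = deriv (deriv v₀) x := by
    rw [show (2 : ℕ) = 1 + 1 from rfl, iteratedDeriv_succ, iteratedDeriv_one]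
  rw [h3, h2, hC0, hC1]
  linear_combination (-(x * (x - 1))) * (key₃ x hx).2 + (-2 * E₀) * (key₁ x hx).2
    + (-2 * E₀ * E₁) * hc1 + ((A₁ * x + B₁) - (2 * x - 1)) * (key₀ x hx).2
    + (A₁ - D₂ * E₁) * hsys₀ x hx
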